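/- arXiv:2111.12218 — 2 statements merged into one kernel-verified Lean document; each statement's English description precedes it below -/
import Mathlib

section
/- Let Γ_Y ⊆ Γ_X be finite sets with m ≤ |Γ_Y|, where m is a positive natural number. Suppose f : Γ_X → ℝ≥0 and g : Γ_Y → ℝ≥0 satisfy g(T) ≤ f(T) for all T ∈ Γ_Y. Then (Σ_{T∈Γ_Y} g(T)) / |Γ_Y| ≤ (sum of the m largest values of f over Γ_X) / m. -/
/-- Sum of the `m` largest elements of a multiset of reals. -/
noncomputable def topSum (V : Multiset ℝ) (m : ℕ) : ℝ :=
  ((V.sort (· ≤ ·)).reverse.take m).sum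

lemma topSum_erase_max (V : Multiset ℝ) (b : ℝ) (hb : b ∈ V)
    (hmax : ∀ x ∈ V, x ≤ b) (m : ℕ) :
    topSum V (m + 1) = b + topSum (V.erase b) m := by
  have hsort : V.sort (· ≤ ·) = (V.erase b).sort (· ≤ ·) ++ [b] := by
    have hperm : List.Perm (V.sort (· ≤ ·)) ((V.erase b).sort (· ≤ ·) ++ [b]) := by
      rw [← Multiset.coe_eq_coe, ← Multiset.coe_add]
      simp only [Multiset.sort_eq]
      show V = V.erase b + {b}
      rw [add_comm, Multiset.singleton_add, Multiset.cons_erase hb]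
    have hs1 : List.Pairwise (· ≤ ·) (V.sort (· ≤ ·)) := Multiset.pairwise_sort _ _
    have hs2 : List.Pairwise (· ≤ ·) ((V.erase b).sort (· ≤ ·) ++ [b]) := by
      rw [List.pairwise_append]
      refine ⟨Multiset.pairwise_sort _ _, List.pairwise_singleton _ _, ?_⟩
      intro x hx y hy
      rw [List.mem_singleton] at hy
      have hxV : x ∈ V.erase b := (Multiset.mem_sort _).mp hx
      rw [hy]
      exact hmax x (Multiset.mem_of_le (Multiset.erase_le b V) hxV)
    exact List.Perm.eq_of_pairwise' hs1 hs2 hperm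
  unfold topSum
  rw [hsort]
  simp [List.reverse_append, List.take_succ_cons]

lemma sum_le_topSum : ∀ (m : ℕ) (V S : Multiset ℝ), S ≤ V → S.card = m →
    S.sum ≤ topSum V m := by
  intro m
  induction m with
  | zero =>
    intro V S _ hc
    rw [Multiset.card_eq_zero] at hc
    simp [hc, topSum]
  | succ m ih =>
    intro V S hS hc
    have hV0 : V ≠ 0 := by
      intro h; subst h
      simp [Multiset.le_zero] at hS
      simp [hS] at hc
    -- get max of V
    obtain ⟨b, hbV, hmax⟩ : ∃ b ∈ V, ∀ x ∈ V, x ≤ b := by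
      have hne : V.toFinset.Nonempty := by
        simpa [Multiset.toFinset_nonempty] using hV0
      obtain ⟨b, hb, hmax⟩ := Finset.exists_max_image V.toFinset id hne
      exact ⟨b, Multiset.mem_toFinset.mp hb,
        fun x hx => hmax x (Multiset.mem_toFinset.mpr hx)⟩
    rw [topSum_erase_max V b hbV hmax m]
    by_cases hbS : b ∈ S
    · have h1 : S.erase b ≤ V.erase b := Multiset.erase_le_erase b hS
      have hc1 : (S.erase b).card = m := by
        rw [Multiset.card_erase_of_mem hbS, hc]; rfl
      calc S.sum = b + (S.erase b).sum := by
            rw [← Multiset.sum_cons, Multiset.cons_erase hbS]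
        _ ≤ b + topSum (V.erase b) m := by
            gcongr; exact ih _ _ h1 hc1
    · have hSle : S ≤ V.erase b := by
        rw [Multiset.le_iff_count]
        intro a
        rcases eq_or_ne a b with rfl | hab
        · simp [Multiset.count_eq_zero_of_notMem hbS]
        · rw [Multiset.count_erase_of_ne hab]
          exact Multiset.le_iff_count.mp hS a
      obtain ⟨a, haS⟩ : ∃ a, a ∈ S := by
        apply Multiset.exists_mem_of_ne_zero
        intro h; subst h; simp at hc
      have hab : a ≤ b := hmax a (Multiset.mem_of_le hS haS)
      have h1 : S.erase a ≤ V.erase b :=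
        le_trans (Multiset.erase_le a S) hSle
      have hc1 : (S.erase a).card = m := by
        rw [Multiset.card_erase_of_mem haS, hc]; rfl
      calc S.sum = a + (S.erase a).sum := by
            rw [← Multiset.sum_cons, Multiset.cons_erase haS]
        _ ≤ b + topSum (V.erase b) m := by
            gcongr; exact ih _ _ h1 hc1

lemma exists_top_finset {τ : Type*} [DecidableEq τ] :
    ∀ (m : ℕ) (s : Finset τ) (g : τ → ℝ), m ≤ s.card →
    ∃ B ⊆ s, B.card = m ∧ ∀ a ∈ B, ∀ y ∈ s, y ∉ B → g y ≤ g a := by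
  intro m
  induction m with
  | zero =>
    intro s g _
    exact ⟨∅, Finset.empty_subset _, rfl, by simp⟩
  | succ m ih =>
    intro s g hms
    have hne : s.Nonempty := Finset.card_pos.mp (lt_of_lt_of_le (Nat.succ_pos m) hms)
    obtain ⟨x, hxs, hxmax⟩ := Finset.exists_max_image s g hne
    have hcard : m ≤ (s.erase x).card := by
      rw [Finset.card_erase_of_mem hxs]
      omega
    obtain ⟨B', hB'sub, hB'card, hB'prop⟩ := ih (s.erase x) g hcard
    have hxB' : x ∉ B' := fun h => (Finset.notMem_erase x s) (hB'sub h)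
    refine ⟨insert x B', ?_, ?_, ?_⟩
    · intro a ha
      rcases Finset.mem_insert.mp ha with rfl | ha
      · exact hxs
      · exact Finset.mem_of_mem_erase (hB'sub ha)
    · rw [Finset.card_insert_of_notMem hxB', hB'card]
    · intro a ha y hy hyB
      rcases Finset.mem_insert.mp ha with rfl | ha
      · exact hxmax y hy
      · refine hB'prop a ha y ?_ ?_
        · exact Finset.mem_erase.mpr ⟨fun h => hyB (h ▸ Finset.mem_insert_self x B'), hy⟩
        · exact fun h => hyB (Finset.mem_insert_of_mem h)

lemma pair_sum_le {τ : Type*} (B C : Finset τ) (g : τ → ℝ)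
    (h : ∀ a ∈ B, ∀ y ∈ C, g y ≤ g a) :
    (∑ y ∈ C, g y) * B.card ≤ (∑ a ∈ B, g a) * C.card := by
  have key : ∀ a ∈ B, ∑ y ∈ C, g y ≤ C.card * g a := by
    intro a ha
    have := Finset.sum_le_card_nsmul C g (g a) (fun y hy => h a ha y hy)
    simpa [nsmul_eq_mul] using this
  calc (∑ y ∈ C, g y) * B.card = ∑ a ∈ B, ∑ y ∈ C, g y := by
        rw [Finset.sum_const, nsmul_eq_mul]; ring
    _ ≤ ∑ a ∈ B, (C.card * g a) := Finset.sum_le_sum key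
    _ = (∑ a ∈ B, g a) * C.card := by rw [← Finset.mul_sum]; ring

theorem avg_le_topM_avg {τ : Type*} [DecidableEq τ]
    (ΓX ΓY : Finset τ) (hsub : ΓY ⊆ ΓX)
    (m : ℕ) (hm : 0 < m) (hmle : m ≤ ΓY.card)
    (f g : τ → ℝ)
    (hf : ∀ T ∈ ΓX, 0 ≤ f T)
    (hg : ∀ T ∈ ΓY, 0 ≤ g T)
    (hgf : ∀ T ∈ ΓY, g T ≤ f T) :
    (∑ T ∈ ΓY, g T) / ΓY.card ≤ topSum (ΓX.val.map f) m / m := by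
  obtain ⟨B, hBsub, hBcard, hBprop⟩ := exists_top_finset m ΓY g hmle
  have hn : (0:ℝ) < ΓY.card := by
    exact_mod_cast lt_of_lt_of_le hm hmle
  have hmpos : (0:ℝ) < m := by exact_mod_cast hm
  -- Step 1: average over ΓY ≤ average of g over B
  have h1 : (∑ T ∈ ΓY, g T) / ΓY.card ≤ (∑ T ∈ B, g T) / m := by
    rw [div_le_div_iff₀ hn hmpos]
    have hsplit : ∑ T ∈ ΓY, g T = ∑ T ∈ B, g T + ∑ T ∈ ΓY \ B, g T := by
      rw [add_comm, Finset.sum_sdiff hBsub]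
    have hpair := pair_sum_le B (ΓY \ B) g
      (fun a ha y hy => hBprop a ha y (Finset.mem_sdiff.mp hy).1 (Finset.mem_sdiff.mp hy).2)
    have hcs : ((ΓY \ B).card : ℝ) = (ΓY.card : ℝ) - m := by
      rw [Finset.card_sdiff_of_subset hBsub, hBcard]
      have : m ≤ ΓY.card := hmle
      push_cast [Nat.cast_sub this]
      ring
    rw [hBcard] at hpair
    rw [hcs] at hpair
    rw [hsplit]
    nlinarith [hpair]
  -- Step 2: ∑ B g ≤ ∑ B f
  have h2 : ∑ T ∈ B, g T ≤ ∑ T ∈ B, f T :=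
    Finset.sum_le_sum (fun T hT => hgf T (hBsub hT))
  -- Step 3: ∑ B f ≤ topSum
  have h3 : ∑ T ∈ B, f T ≤ topSum (ΓX.val.map f) m := by
    have hle : B.val.map f ≤ ΓX.val.map f :=
      Multiset.map_le_map (Finset.val_le_iff.mpr (hBsub.trans hsub))
    have hcard : (B.val.map f).card = m := by
      rw [Multiset.card_map]; exact hBcard
    have h := sum_le_topSum m (ΓX.val.map f) (B.val.map f) hle hcard
    rw [Finset.sum_eq_multiset_sum]
    exact h
  calc (∑ T ∈ ΓY, g T) / ΓY.card ≤ (∑ T ∈ B, g T) / m := h1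
    _ ≤ (∑ T ∈ B, f T) / m := by gcongr
    _ ≤ topSum (ΓX.val.map f) m / m := by gcongr
end

section
/- Utility-occupancy of a pattern over a database is NOT monotone in general: there exists a database D (finite list of transactions with positive item utilities) and itemsets X ⊆ Y, both with nonempty supporting sets, such that uo(Y) < uo(X), and there also exists an instance with uo(X) < uo(Y). Hence uo(·) over a database satisfies neither monotonicity nor anti-monotonicity. -/
/-- Utility-occupancy of a pattern `Z` in a single transaction `T`. -/
noncomputable def uoT (u : Finset ℕ → ℕ → ℝ) (Z T : Finset ℕ) : ℝ :=
  (∑ i ∈ Z, u T i) / (∑ i ∈ T, u T i)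

/-- Utility-occupancy of a pattern `Z` in a database `D`. -/
noncomputable def uoDB (D : Multiset (Finset ℕ)) (u : Finset ℕ → ℕ → ℝ)
    (Z : Finset ℕ) : ℝ :=
  ((D.filter (fun T => Z ⊆ T)).map (uoT u Z)).sum /
    (Multiset.card (D.filter (fun T => Z ⊆ T)))

theorem uo_not_monotone :
    (∃ (D : Multiset (Finset ℕ)) (u : Finset ℕ → ℕ → ℝ) (X Y : Finset ℕ),
      (∀ T ∈ D, ∀ i ∈ T, 0 < u T i) ∧ X ⊆ Y ∧
      D.filter (fun T => X ⊆ T) ≠ 0 ∧ D.filter (fun T => Y ⊆ T) ≠ 0 ∧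
      uoDB D u Y < uoDB D u X) ∧
    (∃ (D : Multiset (Finset ℕ)) (u : Finset ℕ → ℕ → ℝ) (X Y : Finset ℕ),
      (∀ T ∈ D, ∀ i ∈ T, 0 < u T i) ∧ X ⊆ Y ∧
      D.filter (fun T => X ⊆ T) ≠ 0 ∧ D.filter (fun T => Y ⊆ T) ≠ 0 ∧
      uoDB D u X < uoDB D u Y) := by
  constructor
  · refine ⟨{({0} : Finset ℕ), ({0,1,2,3} : Finset ℕ)}, fun _ _ => 1, {0}, {0,1},
      fun T _ i _ => one_pos, ?_, ?_, ?_, ?_⟩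
    · intro x hx; fin_cases hx <;> decide
    · decide
    · decide
    · show uoDB _ _ _ < uoDB _ _ _
      simp only [uoDB, uoT, Multiset.insert_eq_cons, Multiset.filter_cons,
        Multiset.filter_zero]
      norm_num [uoT, Finset.subset_iff, Multiset.filter_singleton]
  · refine ⟨{({0,1} : Finset ℕ)}, fun _ _ => 1, {0}, {0,1},
      fun T _ i _ => one_pos, ?_, ?_, ?_, ?_⟩
    · intro x hx; fin_cases hx <;> decide
    · decide
    · decide
    · show uoDB _ _ _ < uoDB _ _ _
      simp only [uoDB, uoT, Multiset.insert_eq_cons, Multiset.filter_cons,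
        Multiset.filter_zero]
      norm_num [uoT, Finset.subset_iff, Multiset.filter_singleton]
end
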